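/- If a vector field τ on ℝ⁴ is nonvanishing at a point x₀, then there exists a neighborhood U of x₀ and smooth functions K_ν{}^α{}_β on U, symmetric in ν and β, such that ∂_ν τ^α = Σ_β K_ν{}^α{}_β τ^β on U (τ is an integral section of a local symmetric connection). -/
import Mathlib


theorem nonvanishing_vector_field_is_integral_section_of_symmetric_connection
    (τ : (Fin 4 → ℝ) → (Fin 4 → ℝ)) (hτ : ContDiff ℝ (⊤ : ℕ∞) τ)
    (x₀ : Fin 4 → ℝ) (h0 : τ x₀ ≠ 0) :
    ∃ U ∈ nhds x₀, ∃ K : (Fin 4 → ℝ) → (Fin 4 → Fin 4 → Fin 4 → ℝ),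
      ContDiffOn ℝ (⊤ : ℕ∞) K U ∧
      (∀ x ∈ U, ∀ ν α β, K x ν α β = K x β α ν) ∧
      (∀ x ∈ U, ∀ ν α, fderiv ℝ τ x (Pi.single ν 1) α = ∑ β, K x ν α β * τ x β) := by
  -- notation
  set D : (Fin 4 → ℝ) → Fin 4 → Fin 4 → ℝ :=
    fun x ν α => fderiv ℝ τ x (Pi.single ν 1) α with hD
  set s : (Fin 4 → ℝ) → ℝ := fun x => ∑ μ, (τ x μ)^2 with hs
  have hτi : ∀ i, ContDiff ℝ (⊤ : ℕ∞) (fun x => τ x i) := fun i => (contDiff_pi.mp hτ) i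
  have hscd : ContDiff ℝ (⊤ : ℕ∞) s := by
    apply ContDiff.sum
    intro μ _
    exact (hτi μ).pow 2
  have hDcd : ∀ ν α, ContDiff ℝ (⊤ : ℕ∞) (fun x => D x ν α) := by
    intro ν α
    have h1 : ContDiff ℝ (⊤ : ℕ∞) (fderiv ℝ τ) := hτ.fderiv_right (by simp)
    have h2 : ContDiff ℝ (⊤ : ℕ∞) (fun x => fderiv ℝ τ x (Pi.single ν 1)) :=
      h1.clm_apply contDiff_const
    exact (contDiff_pi.mp h2) α
  -- the neighborhood
  refine ⟨{x | s x ≠ 0}, ?_, ?_⟩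
  · have hopen : IsOpen {x | s x ≠ 0} := isOpen_compl_iff.mpr (isClosed_eq hscd.continuous continuous_const)
    apply hopen.mem_nhds
    simp only [Set.mem_setOf_eq, hs]
    intro h
    apply h0
    funext i
    have hz := (Finset.sum_eq_zero_iff_of_nonneg
      (fun μ _ => sq_nonneg (τ x₀ μ))).mp h i (Finset.mem_univ i)
    have : τ x₀ i = 0 := by nlinarith
    simpa using this
  · refine ⟨fun x ν α β =>
      (D x ν α * τ x β + D x β α * τ x ν) / s x
        - (∑ μ, D x μ α * τ x μ) * τ x ν * τ x β / (s x)^2, ?_, ?_, ?_⟩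
    · -- smoothness
      rw [contDiffOn_pi]; intro ν
      rw [contDiffOn_pi]; intro α
      rw [contDiffOn_pi]; intro β
      have hsne : ∀ x ∈ {x | s x ≠ 0}, s x ≠ 0 := fun x hx => hx
      apply ContDiffOn.sub
      · exact ContDiffOn.div
          (((hDcd ν α).mul (hτi β)).add ((hDcd β α).mul (hτi ν))).contDiffOn
          hscd.contDiffOn hsne
      · apply ContDiffOn.div
        · exact (((ContDiff.sum (fun μ _ => (hDcd μ α).mul (hτi μ))).mul (hτi ν)).mul
            (hτi β)).contDiffOn
        · exact (hscd.pow 2).contDiffOn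
        · intro x hx; exact pow_ne_zero 2 (hsne x hx)
    · -- symmetry
      intro x hx ν α β
      ring
    · -- integral section identity
      intro x hx ν α
      have hsx : s x ≠ 0 := hx
      simp only [hD, hs, Fin.sum_univ_four] at hsx ⊢
      field_simp
      ring
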